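/- arXiv:2501.18830 — 4 statements merged into one kernel-verified Lean document; each statement's English description precedes it below -/
import Mathlib

section
/- With the notation of the construction, in the Cayley graph Cay(G, D_R): (i) the set A × {0} is a clique of size q^{mℓ}; and (ii) every clique S of Cay(G, D_R) satisfies |S| ≤ q^{mℓ}. Hence Cay(G, D_R) has clique number q^{mℓ}. -/
/-- The Cayley graph of an additive group `G` with connection set `D` (symmetrized so that
the definition is well formed; when `D = -D` the adjacency `g ~ h` is exactly `g - h ∈ D`). -/
def cayleyGraph {G : Type*} [AddCommGroup G] (D : Set G) : SimpleGraph G where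
  Adj g h := g ≠ h ∧ (g - h ∈ D ∨ h - g ∈ D)
  symm := ⟨fun _ _ hgh => ⟨hgh.1.symm, hgh.2.symm⟩⟩
  loopless := ⟨fun _ hg => hg.1 rfl⟩

/-- The generalized Denniston set `D_R ⊆ A × B` built from a set `Rs ⊆ K`. -/
noncomputable def DenniSet {K A B : Type*} [Field K] [Field A] [Field B]
    [Algebra K A] [Algebra K B] (Rs : Set K) : Set (A × B) :=
  {x : A × B | (x.1 ≠ 0 ∧ x.2 ≠ 0 ∧
      Algebra.norm K x.2 / Algebra.norm K x.1 ∈ Rs \ {0}) ∨ (x.1 ≠ 0 ∧ x.2 = 0)}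

/-!
Every element of `D_R` has nonzero `A`-coordinate, so two distinct vertices of a clique have
distinct `A`-coordinates: projecting to `A` is injective on cliques, which bounds them by `|A|`.
Conversely `(a, 0) ∈ D_R` for every `a ≠ 0`, so `A × {0}` is a clique of exactly that size.
-/

namespace SimpleGraph

lemma cliqueNum_eq_ncard {α : Type*} {G : SimpleGraph α} {S : Set α} (hS : G.IsClique S)
    (hSfin : S.Finite) (hmax : ∀ T, G.IsClique T → T.ncard ≤ S.ncard) :
    G.cliqueNum = S.ncard := by
  refine IsGreatest.csSup_eq ⟨⟨hSfin.toFinset, ?_, ?_⟩, ?_⟩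
  · rwa [hSfin.coe_toFinset]
  · rw [Set.ncard_eq_toFinset_card S hSfin]
  · rintro n ⟨t, ht⟩
    rw [← ht.card_eq, ← Set.ncard_coe_finset]
    exact hmax t ht.isClique

end SimpleGraph

section CayleyGraph

variable {A B : Type*} [AddCommGroup A] [AddCommGroup B] {D : Set (A × B)}

lemma cayleyGraph_isClique_snd_eq_zero (hD : ∀ a : A, a ≠ 0 → ((a, 0) : A × B) ∈ D) :
    (cayleyGraph D).IsClique {x : A × B | x.2 = 0} := by
  intro x hx y hy hxy
  refine ⟨hxy, Or.inl ?_⟩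
  have hsnd : x.2 - y.2 = 0 := by rw [hx, hy, sub_zero]
  have hfst : x.1 - y.1 ≠ 0 := fun h => hxy (Prod.ext (sub_eq_zero.mp h) (hx.trans hy.symm))
  rw [show x - y = (x.1 - y.1, 0) from Prod.ext rfl hsnd]
  exact hD _ hfst

lemma cayleyGraph_fst_injOn_of_isClique (hD : ∀ x ∈ D, x.1 ≠ 0) {S : Set (A × B)}
    (hS : (cayleyGraph D).IsClique S) : S.InjOn Prod.fst := by
  intro x hx y hy hfst
  by_contra hne
  obtain ⟨-, hxy | hyx⟩ := hS hx hy hne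
  · exact hD _ hxy (by rw [Prod.fst_sub, hfst, sub_self])
  · exact hD _ hyx (by rw [Prod.fst_sub, hfst, sub_self])

lemma cayleyGraph_ncard_le_of_isClique [Finite A] (hD : ∀ x ∈ D, x.1 ≠ 0) {S : Set (A × B)}
    (hS : (cayleyGraph D).IsClique S) : S.ncard ≤ Nat.card A := by
  rw [← Set.ncard_univ]
  exact Set.ncard_le_ncard_of_injOn Prod.fst (fun _ _ => Set.mem_univ _)
    (cayleyGraph_fst_injOn_of_isClique hD hS) Set.finite_univ

end CayleyGraph

lemma setOf_snd_eq_zero_eq_univ_prod (A B : Type*) [Zero B] :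
    {x : A × B | x.2 = 0} = Set.univ ×ˢ {0} :=
  (Set.univ_prod (t := {0})).symm

lemma ncard_setOf_snd_eq_zero (A B : Type*) [Zero B] :
    {x : A × B | x.2 = 0}.ncard = Nat.card A := by
  rw [setOf_snd_eq_zero_eq_univ_prod, Set.ncard_prod, Set.ncard_univ, Set.ncard_singleton,
    mul_one]

lemma finite_setOf_snd_eq_zero (A B : Type*) [Finite A] [Zero B] :
    {x : A × B | x.2 = 0}.Finite := by
  rw [setOf_snd_eq_zero_eq_univ_prod]
  exact Set.finite_univ.prod (Set.finite_singleton 0)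

section DenniSet

variable {K A B : Type*} [Field K] [Field A] [Field B] [Algebra K A] [Algebra K B] {Rs : Set K}

lemma fst_ne_zero_of_mem_denniSet {x : A × B} (hx : x ∈ DenniSet Rs) : x.1 ≠ 0 := by
  rcases hx with ⟨h, -⟩ | ⟨h, -⟩ <;> exact h

lemma mk_zero_mem_denniSet {a : A} (ha : a ≠ 0) : ((a, 0) : A × B) ∈ DenniSet Rs :=
  Or.inr ⟨ha, rfl⟩

end DenniSet

theorem stmt4_general (m ℓ q : ℕ)
    (F K A B : Type*) [Field F] [Field K] [Field A] [Field B]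
    [Fintype A]
    [Algebra F K] [Algebra K A] [Algebra K B]
    (hA : Fintype.card A = q ^ (m * ℓ))
    (R : Submodule F K) :
    (cayleyGraph (DenniSet (R : Set K) : Set (A × B))).IsClique
        {x : A × B | x.2 = 0} ∧
    ({x : A × B | x.2 = 0}).ncard = q ^ (m * ℓ) ∧
    (∀ S : Set (A × B),
        (cayleyGraph (DenniSet (R : Set K) : Set (A × B))).IsClique S →
          S.ncard ≤ q ^ (m * ℓ)) ∧
    (cayleyGraph (DenniSet (R : Set K) : Set (A × B))).cliqueNum = q ^ (m * ℓ) := by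
  have hcardA : Nat.card A = q ^ (m * ℓ) := by rw [Nat.card_eq_fintype_card, hA]
  have hclique : (cayleyGraph (DenniSet (R : Set K) : Set (A × B))).IsClique
      {x : A × B | x.2 = 0} :=
    cayleyGraph_isClique_snd_eq_zero fun _ => mk_zero_mem_denniSet
  have hcard : {x : A × B | x.2 = 0}.ncard = q ^ (m * ℓ) := by
    rw [ncard_setOf_snd_eq_zero, hcardA]
  have hbound : ∀ S : Set (A × B),
      (cayleyGraph (DenniSet (R : Set K) : Set (A × B))).IsClique S →
        S.ncard ≤ q ^ (m * ℓ) := fun S hS =>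
    hcardA ▸ cayleyGraph_ncard_le_of_isClique (fun _ => fst_ne_zero_of_mem_denniSet) hS
  refine ⟨hclique, hcard, hbound, ?_⟩
  rw [SimpleGraph.cliqueNum_eq_ncard hclique (finite_setOf_snd_eq_zero A B) (hcard ▸ hbound),
    hcard]

theorem stmt4 (p s m ℓ r q : ℕ) (hp : p.Prime) (hs : 1 ≤ s) (hm : 1 ≤ m) (hl : 1 ≤ ℓ)
    (hr : r ≤ m) (hq : q = p ^ s)
    (F K A B : Type*) [Field F] [Field K] [Field A] [Field B]
    [Fintype F] [Fintype K] [Fintype A] [Fintype B]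
    [Algebra F K] [Algebra K A] [Algebra K B]
    (hF : Fintype.card F = q) (hK : Fintype.card K = q ^ m)
    (hA : Fintype.card A = q ^ (m * ℓ)) (hB : Fintype.card B = q ^ (m * (ℓ + 1)))
    (R : Submodule F K) (hRdim : Module.finrank F R = r) :
    (cayleyGraph (DenniSet (R : Set K) : Set (A × B))).IsClique
        {x : A × B | x.2 = 0} ∧
    ({x : A × B | x.2 = 0}).ncard = q ^ (m * ℓ) ∧
    (∀ S : Set (A × B),
        (cayleyGraph (DenniSet (R : Set K) : Set (A × B))).IsClique S →
          S.ncard ≤ q ^ (m * ℓ)) ∧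
    (cayleyGraph (DenniSet (R : Set K) : Set (A × B))).cliqueNum = q ^ (m * ℓ) :=
  stmt4_general m ℓ q F K A B hA R
end

section
/- With the notation of the construction, set e = (q^m−1)/(q−1). Let α be a generator of the multiplicative group A*, β a generator of B*, and suppose N_A(α) = N_B(β) = γ (then γ generates 𝔽_{q^m}*). Let T = {0 ≤ i < e : γ^i ∈ R}, and for 0 ≤ j < e let C_j^{A} = α^j·⟨α^e⟩ ⊆ A* and C_j^{B} = β^j·⟨β^e⟩ ⊆ B* (indices of C^B read modulo e). Then ⋃_{i=0}^{e−1} ( C_i^{A} × ⋃_{t ∈ T} C_{i+t}^{B} ) ∪ (A* × {0}) = D_R, i.e. the cyclotomic description coincides with the norm-ratio description of D_R. -/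
/-- The coset `g^j • ⟨g^e⟩` of the index-`e` subgroup of the unit group, viewed as a
subset of the field: the cyclotomic class `C_j` of order `e`. -/
def cycClass {A : Type*} [Field A] (g : Aˣ) (e j : ℕ) : Set A :=
  {x : A | ∃ z ∈ Subgroup.zpowers (g ^ e), x = ((g ^ j * z : Aˣ) : A)}

/-- Every `(card F - 1)`-st root of unity in `K` comes from `Fˣ`. -/
lemma aux_roots {F K : Type*} [Field F] [Field K] [Fintype F] [Algebra F K]
    (x : K) (hx : x ^ (Fintype.card F - 1) = 1) :
    ∃ f : Fˣ, algebraMap F K (f : F) = x := by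
  classical
  set n := Fintype.card F - 1 with hn
  have hn0 : 0 < n := by
    have : 1 < Fintype.card F := Fintype.one_lt_card
    omega
  set P : Polynomial K := Polynomial.X ^ n - Polynomial.C 1 with hP
  have hPne : P ≠ 0 := Polynomial.X_pow_sub_C_ne_zero hn0 1
  have hinj : Function.Injective (fun f : Fˣ => algebraMap F K (f : F)) := by
    intro a b hab
    exact Units.ext ((algebraMap F K).injective hab)
  set T : Finset K := Finset.univ.image (fun f : Fˣ => algebraMap F K (f : F)) with hT
  have hcardT : T.card = n := by
    rw [hT, Finset.card_image_of_injective _ hinj, Finset.card_univ, Fintype.card_units, hn]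
  have hroot : ∀ y : K, y ^ n = 1 → y ∈ P.roots.toFinset := by
    intro y hy
    rw [Multiset.mem_toFinset, Polynomial.mem_roots hPne]
    simp [hP, Polynomial.IsRoot, hy]
  have hsub : T ⊆ P.roots.toFinset := by
    intro y hy
    simp only [hT, Finset.mem_image] at hy
    obtain ⟨f, -, rfl⟩ := hy
    apply hroot
    rw [← map_pow]
    have : (f : F) ^ n = 1 := by
      have hfc : f ^ Fintype.card Fˣ = 1 := pow_card_eq_one
      rw [Fintype.card_units, ← hn] at hfc
      simpa using congrArg (Units.val) hfc
    rw [this, map_one]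
  have hcards : P.roots.toFinset.card ≤ T.card := by
    rw [hcardT]
    calc P.roots.toFinset.card ≤ Multiset.card P.roots := P.roots.toFinset_card_le
      _ ≤ P.natDegree := Polynomial.card_roots' P
      _ = n := by rw [hP, Polynomial.natDegree_X_pow_sub_C]
  have heq : T = P.roots.toFinset := Finset.eq_of_subset_of_card_le hsub hcards
  have hxmem : x ∈ T := by rw [heq]; exact hroot x hx
  simp only [hT, Finset.mem_image] at hxmem
  obtain ⟨f, -, hf⟩ := hxmem
  exact ⟨f, hf⟩

/-- Multiplying by a unit coming from the base field preserves membership in a submodule. -/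
lemma aux_scale {F K : Type*} [Field F] [Field K] [Algebra F K] (R : Submodule F K)
    (f : Fˣ) (c x : K) (hf : algebraMap F K (f : F) = c) : c * x ∈ R ↔ x ∈ R := by
  constructor
  · intro h
    have h2 := R.smul_mem ((f⁻¹ : Fˣ) : F) h
    rw [Algebra.smul_def, ← mul_assoc, ← hf, ← map_mul] at h2
    have h3 : ((f⁻¹ : Fˣ) : F) * (f : F) = 1 := by exact_mod_cast f.inv_mul
    rwa [h3, map_one, one_mul] at h2
  · intro h
    have h2 := R.smul_mem (f : F) h
    rwa [Algebra.smul_def, hf] at h2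

lemma aux_grp {G : Type*} [CommGroup G] (g : G) (i t eN : ℕ) (k₁ k₂ : ℤ) :
    g ^ (i + t) * (g ^ eN) ^ k₂ * (g ^ i * (g ^ eN) ^ k₁)⁻¹
      = g ^ ((eN : ℤ) * (k₂ - k₁)) * g ^ t := by
  simp only [← zpow_natCast g, ← zpow_mul, mul_inv, ← zpow_neg, ← zpow_add]
  congr 1
  push_cast
  ring

theorem stmt5 (p s m ℓ r q e : ℕ) (hp : p.Prime) (hs : 1 ≤ s) (hm : 1 ≤ m) (hl : 1 ≤ ℓ)
    (hr : r ≤ m) (hq : q = p ^ s) (he : e = (q ^ m - 1) / (q - 1))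
    (F K A B : Type*) [Field F] [Field K] [Field A] [Field B]
    [Fintype F] [Fintype K] [Fintype A] [Fintype B]
    [Algebra F K] [Algebra K A] [Algebra K B]
    (hF : Fintype.card F = q) (hK : Fintype.card K = q ^ m)
    (hA : Fintype.card A = q ^ (m * ℓ)) (hB : Fintype.card B = q ^ (m * (ℓ + 1)))
    (R : Submodule F K) (hRdim : Module.finrank F R = r)
    (α : Aˣ) (hα : ∀ x : Aˣ, x ∈ Subgroup.zpowers α)
    (β : Bˣ) (hβ : ∀ x : Bˣ, x ∈ Subgroup.zpowers β)
    (γ : K) (hγA : Algebra.norm K (α : A) = γ) (hγB : Algebra.norm K (β : B) = γ) :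
    (⋃ i ∈ Finset.range e,
        (cycClass α e i) ×ˢ (⋃ t ∈ {t : ℕ | t < e ∧ γ ^ t ∈ R}, cycClass β e (i + t)))
      ∪ {x : A × B | x.1 ≠ 0 ∧ x.2 = 0}
    = (DenniSet (R : Set K) : Set (A × B)) := by
  classical
  have hq2 : 2 ≤ q := by
    have h2 := hp.two_le
    have : p ≤ p ^ s := Nat.le_self_pow (by omega) p
    omega
  have hdvd : (q - 1) ∣ (q ^ m - 1) := by
    simpa using Nat.sub_dvd_pow_sub_pow q 1 m
  have hqm2 : 2 ≤ q ^ m := by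
    have : 1 < q ^ m := Nat.one_lt_pow (by omega) (by omega)
    omega
  have heqm : e * (q - 1) = q ^ m - 1 := by
    rw [he, Nat.div_mul_cancel hdvd]
  have he0 : 0 < e := by
    rcases Nat.eq_zero_or_pos e with h | h
    · rw [h, zero_mul] at heqm; omega
    · exact h
  -- norms as unit group homomorphisms
  set νA : Aˣ →* Kˣ := Units.map (Algebra.norm K : A →* K) with hνA
  set νB : Bˣ →* Kˣ := Units.map (Algebra.norm K : B →* K) with hνB
  have hNA : ∀ u : Aˣ, Algebra.norm K (u : A) = ((νA u : Kˣ) : K) := fun u => rfl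
  have hNB : ∀ u : Bˣ, Algebra.norm K (u : B) = ((νB u : Kˣ) : K) := fun u => rfl
  set γu : Kˣ := νA α with hγu
  have hγuval : (γu : K) = γ := by rw [hγu, ← hNA, hγA]
  have hβγ : νB β = γu := by
    apply Units.ext
    rw [← hNB, hγB, hγuval]
  have hγut : ∀ t : ℕ, ((γu ^ t : Kˣ) : K) = γ ^ t := by
    intro t
    rw [Units.val_pow_eq_pow_val, hγuval]
  -- the key scaling fact
  have hscale : ∀ (k : ℤ) (x : K),
      ((γu ^ ((e : ℤ) * k) : Kˣ) : K) * x ∈ R ↔ x ∈ R := by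
    intro k x
    have hroot : (((γu ^ ((e : ℤ) * k) : Kˣ) : K)) ^ (Fintype.card F - 1) = 1 := by
      rw [hF, ← Units.val_pow_eq_pow_val]
      have h1 : (γu ^ ((e : ℤ) * k)) ^ (q - 1 : ℕ) = (γu ^ (e * (q - 1) : ℕ)) ^ k := by
        rw [← zpow_natCast (γu ^ ((e : ℤ) * k)), ← zpow_mul, ← zpow_natCast γu (e * (q-1)),
          ← zpow_mul]
        congr 1
        push_cast
        ring
      have h2 : γu ^ (e * (q - 1) : ℕ) = 1 := by
        rw [heqm]
        have hgc : γu ^ Fintype.card Kˣ = 1 := pow_card_eq_one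
        rwa [Fintype.card_units, hK] at hgc
      rw [h1, h2, one_zpow, Units.val_one]
    obtain ⟨f, hf⟩ := aux_roots (F := F) _ hroot
    exact aux_scale R f _ x hf
  apply Set.ext
  rintro ⟨a, b⟩
  simp only [Set.mem_union, Set.mem_iUnion, Set.mem_prod, Set.mem_setOf_eq, DenniSet,
    Finset.mem_range, Set.mem_diff, Set.mem_singleton_iff, SetLike.mem_coe, exists_prop]
  constructor
  · rintro (⟨i, hi, ⟨ha, hb⟩⟩ | ⟨ha, hb⟩)
    · -- cyclotomic part
      obtain ⟨t, ⟨ht, hγt⟩, hb⟩ := hb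
      obtain ⟨z₁, hz₁, rfl⟩ := ha
      obtain ⟨z₂, hz₂, rfl⟩ := hb
      obtain ⟨k₁, rfl⟩ := Subgroup.mem_zpowers_iff.mp hz₁
      obtain ⟨k₂, rfl⟩ := Subgroup.mem_zpowers_iff.mp hz₂
      left
      refine ⟨Units.ne_zero _, Units.ne_zero _, ?_, ?_⟩
      · have hval : Algebra.norm K ((β ^ (i + t) * (β ^ e) ^ k₂ : Bˣ) : B) /
            Algebra.norm K ((α ^ i * (α ^ e) ^ k₁ : Aˣ) : A)
            = ((γu ^ ((e : ℤ) * (k₂ - k₁)) : Kˣ) : K) * γ ^ t := by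
          rw [hNA, hNB, ← Units.val_div_eq_div_val]
          rw [div_eq_mul_inv]
          simp only [map_mul, map_zpow, map_pow]
          rw [hβγ, ← hγu]
          rw [aux_grp γu i t e k₁ k₂, Units.val_mul, hγut]
        rw [hval]
        exact (hscale (k₂ - k₁) (γ ^ t)).mpr hγt
      · have hval : Algebra.norm K ((β ^ (i + t) * (β ^ e) ^ k₂ : Bˣ) : B) /
            Algebra.norm K ((α ^ i * (α ^ e) ^ k₁ : Aˣ) : A)
            = (((γu ^ ((e : ℤ) * (k₂ - k₁)) * γu ^ t) : Kˣ) : K) := by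
          rw [hNA, hNB, ← Units.val_div_eq_div_val]
          rw [div_eq_mul_inv]
          simp only [map_mul, map_zpow, map_pow]
          rw [hβγ, ← hγu]
          rw [aux_grp γu i t e k₁ k₂]
        rw [hval]
        exact Units.ne_zero _
    · exact Or.inr ⟨ha, hb⟩
  · rintro (⟨ha, hb, hmem, hne⟩ | ⟨ha, hb⟩)
    · left
      set ua : Aˣ := Units.mk0 a ha with hua
      set ub : Bˣ := Units.mk0 b hb with hub
      obtain ⟨x, hx⟩ := Subgroup.mem_zpowers_iff.mp (hα ua)
      obtain ⟨y, hy⟩ := Subgroup.mem_zpowers_iff.mp (hβ ub)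
      have hex : (e : ℤ) ≠ 0 := by exact_mod_cast he0.ne'
      set i : ℕ := (x % e).toNat with hi
      set t : ℕ := ((y - x) % e).toNat with ht
      have hi' : (i : ℤ) = x % e := Int.toNat_of_nonneg (Int.emod_nonneg x hex)
      have ht' : (t : ℤ) = (y - x) % e := Int.toNat_of_nonneg (Int.emod_nonneg (y - x) hex)
      have hilt : i < e := by
        have := Int.emod_lt_of_pos x (by exact_mod_cast he0 : (0:ℤ) < e)
        omega
      have htlt : t < e := by
        have := Int.emod_lt_of_pos (y - x) (by exact_mod_cast he0 : (0:ℤ) < e)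
        omega
      -- a is in the i-th class
      have hamem : a ∈ cycClass α e i := by
        refine ⟨(α ^ e) ^ (x / e), Subgroup.zpow_mem _ (Subgroup.mem_zpowers _) _, ?_⟩
        have : α ^ i * (α ^ e) ^ (x / e) = ua := by
          rw [← hx]
          simp only [← zpow_natCast α, ← zpow_mul, ← zpow_add]
          congr 1
          push_cast
          rw [hi']
          linarith [Int.emod_add_mul_ediv x (e : ℤ)]
        rw [this, hua, Units.val_mk0]
      -- norm ratio computation
      have hratio : Algebra.norm K b / Algebra.norm K a
          = ((γu ^ ((e : ℤ) * ((y - x) / e)) : Kˣ) : K) * γ ^ t := by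
        have hcoe : Algebra.norm K b / Algebra.norm K a
            = ((γu ^ (y - x) : Kˣ) : K) := by
          have h1 : Algebra.norm K a = ((γu ^ x : Kˣ) : K) := by
            have : a = ((ua : Aˣ) : A) := by rw [hua, Units.val_mk0]
            rw [this, hNA, ← hx, map_zpow, ← hγu]
          have h2 : Algebra.norm K b = ((γu ^ y : Kˣ) : K) := by
            have : b = ((ub : Bˣ) : B) := by rw [hub, Units.val_mk0]
            rw [this, hNB, ← hy, map_zpow, hβγ]
          rw [h1, h2, ← Units.val_div_eq_div_val, div_eq_mul_inv, ← zpow_sub]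
        rw [hcoe, ← hγut, ← Units.val_mul, ← zpow_natCast γu t, ← zpow_add]
        congr 2
        rw [ht']
        linarith [Int.emod_add_mul_ediv (y - x) (e : ℤ)]
      have hγt : γ ^ t ∈ R := by
        rw [hratio] at hmem
        exact (hscale ((y - x) / e) (γ ^ t)).mp hmem
      refine ⟨i, hilt, hamem, ?_⟩
      refine ⟨t, ⟨htlt, hγt⟩, ?_⟩
      refine ⟨(β ^ e) ^ (x / e + (y - x) / e),
        Subgroup.zpow_mem _ (Subgroup.mem_zpowers _) _, ?_⟩
      have : β ^ (i + t) * (β ^ e) ^ (x / e + (y - x) / e) = ub := by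
        rw [← hy]
        simp only [← zpow_natCast β, ← zpow_mul, ← zpow_add]
        congr 1
        push_cast
        rw [hi', ht']
        have h1 := Int.emod_add_mul_ediv x (e : ℤ)
        have h2 := Int.emod_add_mul_ediv (y - x) (e : ℤ)
        rw [mul_add]
        linarith
      rw [this, hub, Units.val_mk0]
    · exact Or.inr ⟨ha, hb⟩
end

section
/- With the notation of the dual construction, in the Cayley graph Cay(G, D_R⁺): (i) the set {0} × B is a clique of size q^{m(ℓ+1)}; and (ii) every clique S of Cay(G, D_R⁺) satisfies |S| ≤ q^{m(ℓ+1)}. Hence Cay(G, D_R⁺) has clique number q^{m(ℓ+1)}. -/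
/-- The dual generalized Denniston set `D_R⁺ ⊆ A × B` built from a set `Rp ⊆ K` (intended
as `R^⊥`). -/
noncomputable def DenniDual {K A B : Type*} [Field K] [Field A] [Field B]
    [Algebra K A] [Algebra K B] (Rp : Set K) : Set (A × B) :=
  {x : A × B | (x.1 ≠ 0 ∧ x.2 ≠ 0 ∧
      Algebra.norm K x.2 / Algebra.norm K x.1 ∉ Rp) ∨ (x.1 = 0 ∧ x.2 ≠ 0)}

/-!
Every element of `D_R⁺` has nonzero `B`-component, so the projection `A × B → B` is injective on
every clique of `Cay(A × B, D_R⁺)`, and a clique has at most `|B|` elements. Conversely every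
nonzero element of the subgroup `{0} × B` lies in `D_R⁺`, so this subgroup is a clique of size `|B|`.
-/

namespace SimpleGraph

variable {α : Type*} {G : SimpleGraph α}

theorem cliqueNum_eq_of_isClique {s : Set α} {n : ℕ} (hs : G.IsClique s) (hsfin : s.Finite)
    (hsn : s.ncard = n) (hbound : ∀ t : Set α, G.IsClique t → t.ncard ≤ n) :
    G.cliqueNum = n := by
  have hbound' : ∀ k ∈ {k | ∃ t, G.IsNClique k t}, k ≤ n := by
    rintro k ⟨t, ht⟩
    simpa only [Set.ncard_coe_finset, ht.card_eq] using hbound t ht.isClique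
  apply le_antisymm
  · exact hbound' _ G.exists_isNClique_cliqueNum
  · refine le_csSup ⟨n, hbound'⟩ ⟨hsfin.toFinset, ?_, ?_⟩
    · rwa [Set.Finite.coe_toFinset]
    · rw [← Set.ncard_eq_toFinset_card _ hsfin, hsn]

end SimpleGraph

section CayleyGraph

variable {G : Type*} [AddCommGroup G] {D : Set G}

theorem isClique_cayleyGraph_addSubgroup {H : AddSubgroup G} (hH : ∀ x ∈ H, x ≠ 0 → x ∈ D) :
    (cayleyGraph D).IsClique (H : Set G) :=
  fun _ hx _ hy hxy => ⟨hxy, Or.inl (hH _ (H.sub_mem hx hy) (sub_ne_zero.2 hxy))⟩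

theorem injOn_of_isClique_cayleyGraph {H : Type*} [AddCommGroup H] (f : G →+ H)
    (hD : ∀ d ∈ D, f d ≠ 0) {S : Set G} (hS : (cayleyGraph D).IsClique S) : Set.InjOn f S := by
  intro x hx y hy hfxy
  by_contra hne
  rcases (hS hx hy hne).2 with h | h <;> exact hD _ h (by rw [map_sub, hfxy, sub_self])

theorem ncard_le_of_isClique_cayleyGraph {H : Type*} [AddCommGroup H] [Finite H] (f : G →+ H)
    (hD : ∀ d ∈ D, f d ≠ 0) {S : Set G} (hS : (cayleyGraph D).IsClique S) :
    S.ncard ≤ Nat.card H :=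
  (injOn_of_isClique_cayleyGraph f hD hS).ncard_image.symm.trans_le (Set.ncard_le_card _)

end CayleyGraph

section DenniDual

variable {K A B : Type*} [Field K] [Field A] [Field B] [Algebra K A] [Algebra K B] {Rp : Set K}

theorem snd_ne_zero_of_mem_denniDual {x : A × B} (hx : x ∈ (DenniDual Rp : Set (A × B))) :
    x.2 ≠ 0 := by
  rcases hx with ⟨-, h, -⟩ | ⟨-, h⟩ <;> exact h

theorem mem_denniDual_of_fst_eq_zero {x : A × B} (h₁ : x.1 = 0) (h₂ : x.2 ≠ 0) :
    x ∈ (DenniDual Rp : Set (A × B)) :=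
  Or.inr ⟨h₁, h₂⟩

end DenniDual

theorem setOf_fst_eq_zero_eq_range (A B : Type*) [Zero A] :
    {x : A × B | x.1 = 0} = Set.range (Prod.mk (0 : A)) := by
  ext ⟨a, b⟩
  simp [eq_comm]

theorem stmt10_general (p m ℓ q : ℕ)
    (F K A B : Type*) [Field F] [Field K] [Field A] [Field B]
    [Fintype B]
    [Algebra F K] [Algebra K A] [Algebra K B] [Algebra (ZMod p) K]
    (hB : Fintype.card B = q ^ (m * (ℓ + 1)))
    (R : Submodule F K) :
    (cayleyGraph (DenniDual {z : K | ∀ y ∈ R, Algebra.trace (ZMod p) K (z * y) = 0}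
        : Set (A × B))).IsClique {x : A × B | x.1 = 0} ∧
    ({x : A × B | x.1 = 0}).ncard = q ^ (m * (ℓ + 1)) ∧
    (∀ S : Set (A × B),
        (cayleyGraph (DenniDual {z : K | ∀ y ∈ R, Algebra.trace (ZMod p) K (z * y) = 0}
            : Set (A × B))).IsClique S →
          S.ncard ≤ q ^ (m * (ℓ + 1))) ∧
    (cayleyGraph (DenniDual {z : K | ∀ y ∈ R, Algebra.trace (ZMod p) K (z * y) = 0}
        : Set (A × B))).cliqueNum = q ^ (m * (ℓ + 1)) := by
  set D : Set (A × B) :=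
    DenniDual {z : K | ∀ y ∈ R, Algebra.trace (ZMod p) K (z * y) = 0}
  have hcardB : Nat.card B = q ^ (m * (ℓ + 1)) := Nat.card_eq_fintype_card.trans hB
  have hclique : (cayleyGraph D).IsClique {x : A × B | x.1 = 0} :=
    isClique_cayleyGraph_addSubgroup (H := (AddMonoidHom.fst A B).ker)
      fun x hx hx0 => mem_denniDual_of_fst_eq_zero hx fun h => hx0 (Prod.ext hx h)
  have hcard : ({x : A × B | x.1 = 0}).ncard = q ^ (m * (ℓ + 1)) := by
    rw [setOf_fst_eq_zero_eq_range, Set.ncard_range_of_injective (Prod.mk_right_injective 0),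
      hcardB]
  have hbound : ∀ S : Set (A × B), (cayleyGraph D).IsClique S →
      S.ncard ≤ q ^ (m * (ℓ + 1)) := fun S hS =>
    hcardB ▸ ncard_le_of_isClique_cayleyGraph (AddMonoidHom.snd A B)
      (fun _ hd => snd_ne_zero_of_mem_denniDual hd) hS
  have hfinite : ({x : A × B | x.1 = 0}).Finite := by
    rw [setOf_fst_eq_zero_eq_range]
    exact Set.finite_range _
  exact ⟨hclique, hcard, hbound,
    SimpleGraph.cliqueNum_eq_of_isClique hclique hfinite hcard hbound⟩

theorem stmt10 (p s m ℓ r q : ℕ) (hp : p.Prime) (hs : 1 ≤ s) (hm : 1 ≤ m) (hl : 1 ≤ ℓ)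
    (hr : r ≤ m) (hq : q = p ^ s)
    (F K A B : Type*) [Field F] [Field K] [Field A] [Field B]
    [Fintype F] [Fintype K] [Fintype A] [Fintype B]
    [Algebra F K] [Algebra K A] [Algebra K B] [Algebra (ZMod p) K]
    (hF : Fintype.card F = q) (hK : Fintype.card K = q ^ m)
    (hA : Fintype.card A = q ^ (m * ℓ)) (hB : Fintype.card B = q ^ (m * (ℓ + 1)))
    (R : Submodule F K) (hRdim : Module.finrank F R = r) :
    (cayleyGraph (DenniDual {z : K | ∀ y ∈ R, Algebra.trace (ZMod p) K (z * y) = 0}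
        : Set (A × B))).IsClique {x : A × B | x.1 = 0} ∧
    ({x : A × B | x.1 = 0}).ncard = q ^ (m * (ℓ + 1)) ∧
    (∀ S : Set (A × B),
        (cayleyGraph (DenniDual {z : K | ∀ y ∈ R, Algebra.trace (ZMod p) K (z * y) = 0}
            : Set (A × B))).IsClique S →
          S.ncard ≤ q ^ (m * (ℓ + 1))) ∧
    (cayleyGraph (DenniDual {z : K | ∀ y ∈ R, Algebra.trace (ZMod p) K (z * y) = 0}
        : Set (A × B))).cliqueNum = q ^ (m * (ℓ + 1)) :=
  stmt10_general p m ℓ q F K A B hB R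
end

section
/- Let p be a prime, q a power of p, and 𝔽_q the finite field with q elements. Let ζ_p ∈ ℂ be a primitive p-th root of unity and let ψ be the canonical additive character of 𝔽_q given by ψ(x) = ζ_p^{Tr_{𝔽_q/𝔽_p}(x)}. Let χ be a nontrivial multiplicative character of 𝔽_q with values in ℂ. For m ≥ 1 let 𝔽_{q^m} be the degree-m extension of 𝔽_q, let χ' = χ ∘ N_{𝔽_{q^m}/𝔽_q} be the lift of χ by the field norm and ψ' = ψ ∘ Tr_{𝔽_{q^m}/𝔽_q} the lift of ψ by the field trace. Then the Gauss sums satisfy G(χ', ψ') = (−1)^{m−1} · G(χ, ψ)^m, where G(χ, ψ) = Σ_{x ∈ 𝔽_q^*} χ(x) ψ(x) and G(χ', ψ') = Σ_{x ∈ 𝔽_{q^m}^*} χ'(x) ψ'(x). -/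
/-!
For monic `f = X ^ d + a_{d-1} X ^ (d-1) + ⋯ + a_0` over `F` put
`λ(f) = χ((-1) ^ d a_0) ψ(-a_{d-1})`. Then `λ` is multiplicative, and its sums over the monic
polynomials of degree `d = 0, 1, 2, …` are `1, G(χ, ψ), 0, 0, …` (the last because `χ` is
nontrivial): the L-function `∑ λ(f) T ^ deg f` is `1 + G(χ, ψ) T`. Unique factorisation turns its
logarithmic derivative into Newton's identities, which force the power sums
`p_k = ∑_{d ∣ k} ∑_{f monic irreducible, deg f = d} d λ(f) ^ (k / d)`
to equal `(-1) ^ (k - 1) G(χ, ψ) ^ k`.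
On the other side, `χ(N x) ψ(Tr x) = λ(minpoly x) ^ [E : F(x)]`, and an irreducible polynomial of
degree `d ∣ [E : F]` has exactly `d` roots in `E`; grouping the elements of `E` by minimal
polynomial gives `G(χ', ψ') = p_[E : F]`.
-/

namespace DavenportHasse

open Polynomial Finset UniqueFactorizationMonoid
open scoped Classical

noncomputable section

section Monics

variable (F : Type*) [Field F]

def monicEquivCoeffs (d : ℕ) : {f : F[X] // f.Monic ∧ f.natDegree = d} ≃ (Fin d → F) :=
  (monicEquivDegreeLT d).trans (degreeLTEquiv F d).toEquiv

lemma monicEquivCoeffs_apply {d : ℕ} (f : {f : F[X] // f.Monic ∧ f.natDegree = d}) (i : Fin d) :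
    monicEquivCoeffs F d f i = f.1.coeff i := by
  obtain ⟨f, -, rfl⟩ := f
  simp [monicEquivCoeffs, monicEquivDegreeLT, degreeLTEquiv, eraseLead_coeff_of_ne _ i.2.ne]

variable [Fintype F]

instance (d : ℕ) : Fintype {f : F[X] // f.Monic ∧ f.natDegree = d} :=
  Fintype.ofEquiv _ (monicEquivCoeffs F d).symm

def monicsOfDegree (d : ℕ) : Finset F[X] :=
  (univ : Finset {f : F[X] // f.Monic ∧ f.natDegree = d}).map (Function.Embedding.subtype _)

def irreduciblesOfDegree (d : ℕ) : Finset F[X] :=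
  (monicsOfDegree F d).filter Irreducible

variable {F}

@[simp]
lemma mem_monicsOfDegree {d : ℕ} {f : F[X]} :
    f ∈ monicsOfDegree F d ↔ f.Monic ∧ f.natDegree = d := by
  simp [monicsOfDegree]

@[simp]
lemma mem_irreduciblesOfDegree {d : ℕ} {f : F[X]} :
    f ∈ irreduciblesOfDegree F d ↔ (f.Monic ∧ f.natDegree = d) ∧ Irreducible f := by
  simp [irreduciblesOfDegree]

lemma sum_monicsOfDegree_eq_sum_coeffs {M : Type*} [AddCommMonoid M] {d : ℕ} {g : F[X] → M}
    (G : (Fin d → F) → M) (h : ∀ f ∈ monicsOfDegree F d, g f = G fun i => f.coeff i) :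
    ∑ f ∈ monicsOfDegree F d, g f = ∑ a, G a := by
  rw [monicsOfDegree, sum_map]
  refine Fintype.sum_equiv (monicEquivCoeffs F d) _ _ fun f => ?_
  rw [Function.Embedding.subtype_apply, h f.1 (by simpa using f.2)]
  congr 1
  ext i
  exact (monicEquivCoeffs_apply F f i).symm

end Monics

section MonicChar

variable {F R : Type*} [Field F] [CommRing R] (χ : MulChar F R) (ψ : AddChar F R)

-- For irreducible `f` with root `α` this is `χ (N α) * ψ (Tr α)`, with norm and trace of `F(α)/F`.
def monicChar (f : F[X]) : R :=
  χ ((-1) ^ f.natDegree * f.coeff 0) * ψ (-f.nextCoeff)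

@[simp]
lemma monicChar_one : monicChar χ ψ 1 = 1 := by
  simp [monicChar, nextCoeff]

lemma monicChar_mul {f g : F[X]} (hf : f.Monic) (hg : g.Monic) :
    monicChar χ ψ (f * g) = monicChar χ ψ f * monicChar χ ψ g := by
  rw [monicChar, natDegree_mul hf.ne_zero hg.ne_zero, hf.nextCoeff_mul hg, mul_coeff_zero,
    neg_add, AddChar.map_add_eq_mul, pow_add,
    mul_mul_mul_comm, map_mul, monicChar, monicChar]
  ring

lemma monicChar_pow {f : F[X]} (hf : f.Monic) (n : ℕ) :
    monicChar χ ψ (f ^ n) = monicChar χ ψ f ^ n := by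
  induction n with
  | zero => simp
  | succ n ih => rw [pow_succ, monicChar_mul χ ψ (hf.pow n) hf, ih, pow_succ]

variable [Fintype F]

def monicCharSum (d : ℕ) : R :=
  ∑ f ∈ monicsOfDegree F d, monicChar χ ψ f

lemma monicCharSum_zero : monicCharSum χ ψ 0 = 1 := by
  rw [monicCharSum, sum_monicsOfDegree_eq_sum_coeffs (fun _ => 1) fun f hf => ?_]
  · simp
  obtain ⟨hmonic, hdeg⟩ := mem_monicsOfDegree.mp hf
  simp [hmonic.natDegree_eq_zero.mp hdeg]

lemma monicCharSum_one : monicCharSum χ ψ 1 = gaussSum χ ψ := by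
  rw [monicCharSum, sum_monicsOfDegree_eq_sum_coeffs (fun a => χ (-a 0) * ψ (-a 0)) fun f hf => ?_]
  swap
  · obtain ⟨-, hdeg⟩ := mem_monicsOfDegree.mp hf
    simp [monicChar, hdeg, nextCoeff_of_natDegree_pos]
  rw [gaussSum,
    ← (Equiv.funUnique (Fin 1) F).symm.sum_comp, ← Equiv.sum_comp (Equiv.neg F)]
  simp

lemma monicCharSum_eq_zero [IsDomain R] (hχ : χ ≠ 1) {d : ℕ} (hd : 2 ≤ d) :
    monicCharSum χ ψ d = 0 := by
  obtain ⟨n, rfl⟩ := Nat.exists_eq_add_of_le' hd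
  rw [monicCharSum, sum_monicsOfDegree_eq_sum_coeffs
    (fun a => χ ((-1) ^ (n + 2) * a 0) * ψ (-a (Fin.last _))) fun f hf => ?_]
  swap
  · obtain ⟨-, hdeg⟩ := mem_monicsOfDegree.mp hf
    simp [monicChar, hdeg, nextCoeff_of_natDegree_pos]
  rw [← (Fin.consEquiv fun _ => F).sum_comp, Fintype.sum_prod_type]
  simp only [Fin.consEquiv_apply, Fin.cons_zero, ← Fin.succ_last, Fin.cons_succ, map_mul,
    mul_assoc, ← mul_sum, ← sum_mul, MulChar.sum_eq_zero_of_ne_one hχ]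
  simp

def irreduciblePowerSum (k : ℕ) : R :=
  ∑ d ∈ k.divisors, ∑ f ∈ irreduciblesOfDegree F d, (d : R) * monicChar χ ψ f ^ (k / d)

end MonicChar

lemma sum_Icc_sum_divisorsAntidiagonal {M : Type*} [AddCommMonoid M] (k : ℕ) (G : ℕ → ℕ → M) :
    ∑ j ∈ Icc 1 k, ∑ x ∈ j.divisorsAntidiagonal, G x.1 x.2 =
      ∑ d ∈ Icc 1 k, ∑ t ∈ Icc 1 k, if d * t ≤ k then G d t else 0 := by
  rw [sum_comm' (t' := (Icc 1 k ×ˢ Icc 1 k).filter fun x => x.1 * x.2 ≤ k)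
    (s' := fun x => {x.1 * x.2})]
  · simp only [sum_singleton, sum_filter, sum_product]
  · rintro j ⟨d, t⟩
    simp only [mem_Icc, Nat.mem_divisorsAntidiagonal, mem_filter, mem_product, mem_singleton]
    constructor
    · rintro ⟨hj, rfl, -⟩
      have := Nat.pos_of_ne_zero (left_ne_zero_of_mul (by omega : d * t ≠ 0))
      have := Nat.pos_of_ne_zero (right_ne_zero_of_mul (by omega : d * t ≠ 0))
      exact ⟨rfl, ⟨⟨by omega, by nlinarith⟩, by omega, by nlinarith⟩, hj.2⟩
    · rintro ⟨rfl, ⟨⟨hd, -⟩, ht, -⟩, hk⟩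
      exact ⟨⟨Nat.one_le_iff_ne_zero.mpr (by positivity), hk⟩, rfl, by positivity⟩

section Factorization

variable {F : Type*} [Field F]

lemma sum_count_normalizedFactors_mul_natDegree {g : F[X]} (hg : g.Monic) :
    ∑ f ∈ (normalizedFactors g).toFinset, (normalizedFactors g).count f * f.natDegree =
      g.natDegree := by
  have hmonic (f) (hf : f ∈ normalizedFactors g) : f.Monic :=
    ((Polynomial.mem_normalizedFactors_iff hg.ne_zero).mp hf).2.1
  simp only [← smul_eq_mul]
  rw [← sum_multiset_map_count, ← natDegree_multiset_prod_of_monic _ hmonic,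
    prod_normalizedFactors_eq hg.ne_zero, hg.normalize_eq_self]

lemma card_filter_pow_dvd_eq_count {f g : F[X]} (hf : f.Monic) (hirr : Irreducible f)
    (hg : g ≠ 0) {k : ℕ} (hk : g.natDegree ≤ k) :
    #{t ∈ Icc 1 k | f ^ t ∣ g} = (normalizedFactors g).count f := by
  have hdvd (t : ℕ) : f ^ t ∣ g ↔ t ≤ (normalizedFactors g).count f := by
    rw [pow_dvd_iff_le_emultiplicity, emultiplicity_eq_count_normalizedFactors hirr hg,
      hf.normalize_eq_self, Nat.cast_le]
  have hcount : (normalizedFactors g).count f ≤ k := by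
    have h := natDegree_le_of_dvd ((hdvd _).mpr le_rfl) hg
    rw [natDegree_pow] at h
    nlinarith [hirr.natDegree_pos]
  have hfilter : {t ∈ Icc 1 k | t ≤ (normalizedFactors g).count f} =
      Icc 1 ((normalizedFactors g).count f) := by
    ext t
    simp only [mem_filter, mem_Icc]
    omega
  rw [filter_congr fun t _ => hdvd t, hfilter, Nat.card_Icc, Nat.add_sub_cancel]

end Factorization

section Counting

variable {F : Type*} [Field F] [Fintype F]

lemma pairwiseDisjoint_irreduciblesOfDegree (s : Set ℕ) :
    s.PairwiseDisjoint (irreduciblesOfDegree F) := fun _ _ _ _ hne =>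
  disjoint_left.mpr fun _ ha hb =>
    hne ((mem_irreduciblesOfDegree.mp ha).1.2.symm.trans (mem_irreduciblesOfDegree.mp hb).1.2)

lemma sum_monicsOfDegree_filter_dvd {M : Type*} [AddCommMonoid M] {u : F[X]} (hu : u.Monic)
    (k : ℕ) (G : F[X] → M) :
    ∑ g ∈ monicsOfDegree F k with u ∣ g, G g =
      if u.natDegree ≤ k then ∑ h ∈ monicsOfDegree F (k - u.natDegree), G (u * h) else 0 := by
  split_ifs with hk
  · symm
    refine sum_nbij (u * ·) (fun h hh => ?_) (fun a _ b _ hab => mul_left_cancel₀ hu.ne_zero hab)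
      (fun g hg => ?_) fun _ _ => rfl
    · obtain ⟨hmonic, hdeg⟩ := mem_monicsOfDegree.mp hh
      simp only [mem_filter, mem_monicsOfDegree, dvd_mul_right, and_true]
      refine ⟨hu.mul hmonic, ?_⟩
      rw [natDegree_mul hu.ne_zero hmonic.ne_zero, hdeg]
      omega
    · rw [coe_filter, Set.mem_ofPred_eq, mem_monicsOfDegree] at hg
      obtain ⟨⟨hmonic, hdeg⟩, h, rfl⟩ := hg
      have hh : h.Monic := hu.of_mul_monic_left hmonic
      refine ⟨h, mem_monicsOfDegree.mpr ⟨hh, ?_⟩, rfl⟩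
      rw [natDegree_mul hu.ne_zero hh.ne_zero] at hdeg
      omega
  · refine sum_eq_zero fun g hg => absurd ?_ hk
    rw [mem_filter, mem_monicsOfDegree] at hg
    obtain ⟨⟨hmonic, rfl⟩, hdvd⟩ := hg
    exact natDegree_le_of_dvd hdvd hmonic.ne_zero

lemma sum_irreduciblesOfDegree_pow_dvd {g : F[X]} (hg : g.Monic) {k : ℕ} (hk : g.natDegree = k) :
    ∑ d ∈ Icc 1 k, ∑ t ∈ Icc 1 k, ∑ f ∈ irreduciblesOfDegree F d, (if f ^ t ∣ g then d else 0) =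
      k := by
  have hsub : (normalizedFactors g).toFinset ⊆ (Icc 1 k).biUnion (irreduciblesOfDegree F) := by
    intro f hf
    obtain ⟨hirr, hmonic, hdvd⟩ :=
      (Polynomial.mem_normalizedFactors_iff hg.ne_zero).mp (Multiset.mem_toFinset.mp hf)
    have hle := natDegree_le_of_dvd hdvd hg.ne_zero
    simp only [mem_biUnion, mem_Icc, mem_irreduciblesOfDegree]
    exact ⟨f.natDegree, ⟨hirr.natDegree_pos, hk ▸ hle⟩, ⟨hmonic, rfl⟩, hirr⟩
  calc _ = ∑ d ∈ Icc 1 k, ∑ f ∈ irreduciblesOfDegree F d,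
        (normalizedFactors g).count f * f.natDegree := by
        refine sum_congr rfl fun d _ => ?_
        rw [sum_comm]
        refine sum_congr rfl fun f hf => ?_
        obtain ⟨⟨hmonic, rfl⟩, hirr⟩ := mem_irreduciblesOfDegree.mp hf
        rw [← sum_filter, sum_const, smul_eq_mul,
          card_filter_pow_dvd_eq_count hmonic hirr hg.ne_zero hk.le]
    _ = ∑ f ∈ (normalizedFactors g).toFinset, (normalizedFactors g).count f * f.natDegree := by
        rw [← sum_biUnion (pairwiseDisjoint_irreduciblesOfDegree _)]
        exact (sum_subset hsub fun f _ hf => by rw [Multiset.count_eq_zero_of_notMem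
          (Multiset.mem_toFinset.not.mp hf), zero_mul]).symm
    _ = k := by rw [sum_count_normalizedFactors_mul_natDegree hg, hk]

end Counting

section PowerSums

variable {F R : Type*} [Field F] [Fintype F] [CommRing R] (χ : MulChar F R) (ψ : AddChar F R)

theorem sum_irreduciblePowerSum_mul_monicCharSum (k : ℕ) :
    ∑ j ∈ Icc 1 k, irreduciblePowerSum χ ψ j * monicCharSum χ ψ (k - j) =
      k * monicCharSum χ ψ k := by
  calc _ = ∑ d ∈ Icc 1 k, ∑ t ∈ Icc 1 k, if d * t ≤ k then ∑ f ∈ irreduciblesOfDegree F d,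
        ∑ h ∈ monicsOfDegree F (k - d * t), (d : R) * monicChar χ ψ (f ^ t * h) else 0 := by
        rw [← sum_Icc_sum_divisorsAntidiagonal]
        refine sum_congr rfl fun j _ => ?_
        rw [irreduciblePowerSum, ← Nat.sum_divisorsAntidiagonal
          (fun d t => ∑ f ∈ irreduciblesOfDegree F d, (d : R) * monicChar χ ψ f ^ t), sum_mul]
        refine sum_congr rfl fun x hx => ?_
        rw [(Nat.mem_divisorsAntidiagonal.mp hx).1, sum_mul]
        refine sum_congr rfl fun f hf => ?_
        have hmonic := (mem_irreduciblesOfDegree.mp hf).1.1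
        rw [monicCharSum, mul_sum]
        refine sum_congr rfl fun h hh => ?_
        rw [monicChar_mul χ ψ (hmonic.pow _) (mem_monicsOfDegree.mp hh).1, monicChar_pow χ ψ hmonic,
          mul_assoc]
    _ = ∑ d ∈ Icc 1 k, ∑ t ∈ Icc 1 k, ∑ f ∈ irreduciblesOfDegree F d,
          ∑ g ∈ monicsOfDegree F k, if f ^ t ∣ g then (d : R) * monicChar χ ψ g else 0 := by
        refine sum_congr rfl fun d _ => sum_congr rfl fun t _ => ?_
        rw [ite_sum_zero]
        refine sum_congr rfl fun f hf => ?_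
        obtain ⟨⟨hmonic, rfl⟩, -⟩ := mem_irreduciblesOfDegree.mp hf
        rw [← sum_filter, sum_monicsOfDegree_filter_dvd (hmonic.pow t), natDegree_pow, mul_comm t]
    _ = ∑ g ∈ monicsOfDegree F k, ((∑ d ∈ Icc 1 k, ∑ t ∈ Icc 1 k,
          ∑ f ∈ irreduciblesOfDegree F d, if f ^ t ∣ g then d else 0 : ℕ) : R) *
            monicChar χ ψ g := by
        simp only [Nat.cast_sum, Nat.cast_ite, Nat.cast_zero, sum_mul, ite_mul, zero_mul]
        simp_rw [sum_comm (s := monicsOfDegree F k)]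
    _ = _ := by
        rw [monicCharSum, mul_sum]
        refine sum_congr rfl fun g hg => ?_
        obtain ⟨hg, hk⟩ := mem_monicsOfDegree.mp hg
        rw [sum_irreduciblesOfDegree_pow_dvd hg hk]

theorem irreduciblePowerSum_eq [IsDomain R] (hχ : χ ≠ 1) {k : ℕ} (hk : 1 ≤ k) :
    irreduciblePowerSum χ ψ k = (-1) ^ (k - 1) * gaussSum χ ψ ^ k := by
  induction k, hk using Nat.le_induction with
  | base => simpa [monicCharSum_zero, monicCharSum_one] using
      sum_irreduciblePowerSum_mul_monicCharSum χ ψ 1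
  | succ k hk ih =>
    have h := sum_irreduciblePowerSum_mul_monicCharSum χ ψ (k + 1)
    rw [monicCharSum_eq_zero χ ψ hχ (by omega), mul_zero,
      sum_eq_add_of_mem k (k + 1) (by simp; omega) (by simp) (by omega) fun j hj hne => ?_,
      Nat.sub_self, monicCharSum_zero, Nat.add_sub_cancel_left, monicCharSum_one, ih] at h
    · obtain ⟨k, rfl⟩ := Nat.exists_eq_add_of_le' hk
      rw [Nat.add_sub_cancel] at h ⊢
      linear_combination h
    · rw [monicCharSum_eq_zero χ ψ hχ (by simp at hj; omega), mul_zero]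

end PowerSums

section FieldExtension

open IntermediateField Module

variable {F E R : Type*} [Field F] [Field E] [Algebra F E] [CommRing R]

lemma mulChar_norm_mul_addChar_trace [FiniteDimensional F E] (χ : MulChar F R)
    (ψ : AddChar F R) (x : E) :
    χ (Algebra.norm F x) * ψ (Algebra.trace F E x) =
      monicChar χ ψ (minpoly F x) ^ finrank F⟮x⟯ E := by
  have hx := IsIntegral.of_finite F x
  have hnorm : Algebra.norm F (AdjoinSimple.gen F x) =
      (-1) ^ (minpoly F x).natDegree * (minpoly F x).coeff 0 := by
    simpa [adjoin.powerBasis_dim, minpoly_gen] using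
      Algebra.PowerBasis.norm_gen_eq_coeff_zero_minpoly (adjoin.powerBasis hx)
  rw [Algebra.norm_eq_norm_adjoin, hnorm, trace_eq_finrank_mul_minpoly_nextCoeff,
    ← nsmul_eq_mul, AddChar.map_nsmul_eq_pow, map_pow, monicChar, mul_pow]

variable [Fintype F] [Fintype E]

lemma card_filter_minpoly_eq {f : F[X]} (hf : f.Monic) (hirr : Irreducible f)
    (hdvd : f.natDegree ∣ finrank F E) : #{x : E | minpoly F x = f} = f.natDegree := by
  have hsplits : Splits (f.map (algebraMap F E)) := by
    rw [hirr.natDegree_dvd_iff_dvd_X_pow_card_pow_sub_X, ← natCard_eq_pow_finrank,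
      Nat.card_eq_fintype_card] at hdvd
    exact (IsSplittingField.splits E (X ^ Fintype.card E - X)).of_dvd
      (Polynomial.map_ne_zero (FiniteField.X_pow_card_sub_X_ne_zero F Fintype.one_lt_card))
      (Polynomial.map_dvd _ hdvd)
  rw [← card_rootSet_eq_natDegree (PerfectField.separable_of_irreducible hirr) hsplits,
    ← Set.toFinset_card]
  congr 1
  ext x
  simp only [mem_filter, mem_univ, true_and, Set.mem_toFinset, mem_rootSet_of_ne hf.ne_zero]
  exact ⟨fun h => h ▸ minpoly.aeval F x,
    fun h => (minpoly.eq_of_irreducible_of_monic hirr h hf).symm⟩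

lemma sum_minpoly_eq {M : Type*} [AddCommMonoid M] (G : F[X] → M) :
    ∑ x : E, G (minpoly F x) =
      ∑ d ∈ (finrank F E).divisors, ∑ f ∈ irreduciblesOfDegree F d, d • G f := by
  have hmaps (x : E) (_ : x ∈ univ) :
      minpoly F x ∈ (finrank F E).divisors.biUnion (irreduciblesOfDegree F) := by
    have hx := IsIntegral.of_finite F x
    simp only [mem_biUnion, Nat.mem_divisors, mem_irreduciblesOfDegree]
    exact ⟨_, ⟨minpoly.degree_dvd hx, finrank_pos.ne'⟩, ⟨minpoly.monic hx, rfl⟩,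
      minpoly.irreducible hx⟩
  rw [← sum_fiberwise_of_maps_to hmaps, sum_biUnion (pairwiseDisjoint_irreduciblesOfDegree _)]
  refine sum_congr rfl fun d hd => sum_congr rfl fun f hf => ?_
  obtain ⟨⟨hmonic, rfl⟩, hirr⟩ := mem_irreduciblesOfDegree.mp hf
  rw [sum_congr rfl fun x hx => by rw [(mem_filter.mp hx).2], sum_const,
    card_filter_minpoly_eq hmonic hirr (Nat.mem_divisors.mp hd).1]

theorem sum_norm_trace_eq_irreduciblePowerSum (χ : MulChar F R) (ψ : AddChar F R) :
    ∑ x : E, χ (Algebra.norm F x) * ψ (Algebra.trace F E x) =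
      irreduciblePowerSum χ ψ (finrank F E) := by
  have hexp (x : E) : finrank F⟮x⟯ E = finrank F E / (minpoly F x).natDegree := by
    have hx := IsIntegral.of_finite F x
    refine (Nat.div_eq_of_eq_mul_right (minpoly.natDegree_pos hx) ?_).symm
    rw [← adjoin.finrank hx, finrank_mul_finrank]
  simp only [mulChar_norm_mul_addChar_trace, hexp]
  rw [sum_minpoly_eq fun f => monicChar χ ψ f ^ (finrank F E / f.natDegree), irreduciblePowerSum]
  refine sum_congr rfl fun d _ => sum_congr rfl fun f hf => ?_
  rw [(mem_irreduciblesOfDegree.mp hf).1.2, nsmul_eq_mul]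

end FieldExtension

end

end DavenportHasse

theorem stmt18_general
    (F E : Type*) [Field F] [Fintype F] [Field E] [Fintype E]
    [Algebra F E]
    (m : ℕ) (hE : Module.finrank F E = m)
    (ψ : AddChar F ℂ)
    (ψ' : AddChar E ℂ) (hψ' : ∀ x : E, ψ' x = ψ (Algebra.trace F E x))
    (χ : MulChar F ℂ) (hχ : ∃ a : F, a ≠ 0 ∧ χ a ≠ 1)
    (χ' : MulChar E ℂ) (hχ' : ∀ x : E, χ' x = χ (Algebra.norm F x)) :
    gaussSum χ' ψ' = (-1) ^ (m - 1) * gaussSum χ ψ ^ m := by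
  have hχ₁ : χ ≠ 1 := by
    obtain ⟨a, ha, hχa⟩ := hχ
    exact fun h => hχa (h ▸ MulChar.one_apply (isUnit_iff_ne_zero.mpr ha))
  subst hE
  rw [← DavenportHasse.irreduciblePowerSum_eq χ ψ hχ₁ Module.finrank_pos,
    ← DavenportHasse.sum_norm_trace_eq_irreduciblePowerSum]
  simp only [gaussSum, hχ', hψ']

theorem stmt18 (p s q : ℕ) (hp : p.Prime) (hs : 1 ≤ s) (hq : q = p ^ s)
    (F E : Type*) [Field F] [Fintype F] [Field E] [Fintype E]
    [Algebra F E] [Algebra (ZMod p) F]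
    (hF : Fintype.card F = q)
    (m : ℕ) (hm : 1 ≤ m) (hE : Module.finrank F E = m)
    (ζ : ℂ) (hζ : IsPrimitiveRoot ζ p)
    (ψ : AddChar F ℂ) (hψ : ∀ x : F, ψ x = ζ ^ (Algebra.trace (ZMod p) F x).val)
    (ψ' : AddChar E ℂ) (hψ' : ∀ x : E, ψ' x = ψ (Algebra.trace F E x))
    (χ : MulChar F ℂ) (hχ : ∃ a : F, a ≠ 0 ∧ χ a ≠ 1)
    (χ' : MulChar E ℂ) (hχ' : ∀ x : E, χ' x = χ (Algebra.norm F x)) :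
    gaussSum χ' ψ' = (-1) ^ (m - 1) * gaussSum χ ψ ^ m :=
  stmt18_general F E m hE ψ ψ' hψ' χ hχ χ' hχ'
end
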